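/- arXiv:2209.01663 — 5 statements merged into one kernel-verified Lean document; each statement's English description precedes it below -/
import Mathlib

section
/- Let p be a C*-seminorm on a commutative unital complex *-algebra A (i.e., p(x x*) = p(x)² for all x). Then p(e) = 1 (assuming p is nontrivial), p(x*) = p(x) for all x, and p is submultiplicative: p(xy) ≤ p(x)p(y). -/
/-!
On a self-adjoint `h` the C*-identity reads `p (h ^ 2) = p h ^ 2`, hence
`p (h ^ 2 ^ n) = p h ^ 2 ^ n`. For self-adjoint `a`, `b` the polarization identity
`4 a b = (a + b) ^ 2 - (a - b) ^ 2`, applied to rescaled `r • a` and `s • b`, gives the weak bound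
`p (a b) ≤ 2 p a p b`. Since `a b` is self-adjoint by commutativity, applying the weak bound to
`a ^ 2 ^ n` and `b ^ 2 ^ n` and taking `2 ^ n`-th roots removes the factor `2`. Arbitrary `x`, `y`
reduce to this case through `p (x y) ^ 2 = p ((x x⋆) (y y⋆))`.
-/

open Filter Topology

theorem le_of_forall_pow_le_mul_pow {c d C : ℝ} {k : ℕ → ℕ} (hk : Tendsto k atTop atTop)
    (hd : 0 ≤ d) (h : ∀ n, c ^ k n ≤ C * d ^ k n) : c ≤ d := by
  by_contra! hdc
  have hc : 0 < c := hd.trans_lt hdc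
  have hq : Tendsto (fun n ↦ C * (d / c) ^ k n) atTop (𝓝 0) := by
    simpa using ((tendsto_pow_atTop_nhds_zero_of_lt_one (div_nonneg hd hc.le)
      ((div_lt_one hc).2 hdc)).comp hk).const_mul C
  obtain ⟨n, hn⟩ := (hq.eventually (gt_mem_nhds one_pos)).exists
  rw [div_pow, mul_div_assoc', div_lt_one (by positivity)] at hn
  exact (h n).not_gt hn

namespace Seminorm

variable {A : Type*} [CommRing A] [Algebra ℂ A] [StarRing A]

def IsCStar (p : Seminorm ℂ A) : Prop := ∀ x, p (x * star x) = p x ^ 2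

variable {p : Seminorm ℂ A}

theorem IsCStar.map_star (hp : p.IsCStar) (x : A) : p (star x) = p x := by
  have h := hp (star x)
  rw [star_star, mul_comm, hp x] at h
  exact (pow_left_inj₀ (apply_nonneg p _) (apply_nonneg p _) two_ne_zero).mp h.symm

theorem IsCStar.map_sq (hp : p.IsCStar) {a : A} (ha : IsSelfAdjoint a) :
    p (a ^ 2) = p a ^ 2 := by
  rw [sq, ← hp a, ha.star_eq]

theorem IsCStar.map_pow_two_pow (hp : p.IsCStar) {a : A} (ha : IsSelfAdjoint a) (n : ℕ) :
    p (a ^ 2 ^ n) = p a ^ 2 ^ n := by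
  induction n with
  | zero => simp
  | succ n ih => rw [pow_succ, pow_mul, pow_mul, hp.map_sq (ha.pow _), ih]

theorem IsCStar.two_mul_map_mul_le (hp : p.IsCStar) {a b : A} (ha : IsSelfAdjoint a)
    (hb : IsSelfAdjoint b) : 2 * p (a * b) ≤ (p a + p b) ^ 2 := by
  have polarization : (4 : ℂ) • (a * b) = (a + b) ^ 2 - (a - b) ^ 2 := by
    rw [Algebra.smul_def, map_ofNat]
    ring
  have h4 : 4 * p (a * b) ≤ p (a + b) ^ 2 + p (a - b) ^ 2 :=
    calc 4 * p (a * b) = p ((a + b) ^ 2 - (a - b) ^ 2) := by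
          rw [← polarization, map_smul_eq_mul]; norm_num
      _ ≤ p ((a + b) ^ 2) + p ((a - b) ^ 2) := map_sub_le_add p _ _
      _ = p (a + b) ^ 2 + p (a - b) ^ 2 := by
          rw [hp.map_sq (ha.add hb), hp.map_sq (ha.sub hb)]
  have hadd := map_add_le_add p a b
  have hsub := map_sub_le_add p a b
  nlinarith [apply_nonneg p (a + b), apply_nonneg p (a - b)]

variable [StarModule ℂ A]

theorem IsCStar.map_mul_le_two_mul (hp : p.IsCStar) {a b : A} (ha : IsSelfAdjoint a)
    (hb : IsSelfAdjoint b) : p (a * b) ≤ 2 * p a * p b := by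
  have hlim : Tendsto (fun ε ↦ 2 * (p a + ε) * (p b + ε)) (𝓝[>] 0) (𝓝 (2 * p a * p b)) := by
    have : Continuous fun ε : ℝ ↦ 2 * (p a + ε) * (p b + ε) := by fun_prop
    simpa using (this.tendsto 0).mono_left nhdsWithin_le_nhds
  refine ge_of_tendsto hlim (eventually_nhdsWithin_of_forall fun ε (hε : 0 < ε) ↦ ?_)
  -- Rescale so that `p (r • a)` and `p (s • b)` are both at most `r * s`; `ε` keeps `r, s > 0`.
  set r := p b + ε
  set s := p a + ε
  have hr : 0 < r := by positivity
  have hs : 0 < s := by positivity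
  have hscale : ((r : ℂ) • a) * ((s : ℂ) • b) = ((r * s : ℝ) : ℂ) • (a * b) := by
    rw [smul_mul_smul_comm, Complex.ofReal_mul]
  have h := hp.two_mul_map_mul_le (IsSelfAdjoint.smul (Complex.conj_ofReal r) ha)
    (IsSelfAdjoint.smul (Complex.conj_ofReal s) hb)
  simp only [hscale, map_smul_eq_mul, Complex.norm_of_nonneg hr.le, Complex.norm_of_nonneg hs.le,
    Complex.norm_of_nonneg (mul_pos hr hs).le] at h
  have hra : r * p a ≤ r * s := by gcongr; linarith
  have hsb : s * p b ≤ r * s := by rw [mul_comm r]; gcongr; linarith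
  have hsum : (r * p a + s * p b) ^ 2 ≤ (2 * (r * s)) ^ 2 := by
    gcongr
    linarith
  have hrs : 0 < r * s := mul_pos hr hs
  nlinarith

theorem IsCStar.map_mul_le_of_isSelfAdjoint (hp : p.IsCStar) {a b : A} (ha : IsSelfAdjoint a)
    (hb : IsSelfAdjoint b) : p (a * b) ≤ p a * p b := by
  refine le_of_forall_pow_le_mul_pow (C := 2) (tendsto_pow_atTop_atTop_of_one_lt one_lt_two)
    (mul_nonneg (apply_nonneg p a) (apply_nonneg p b)) fun n ↦ ?_
  calc p (a * b) ^ 2 ^ n = p (a ^ 2 ^ n * b ^ 2 ^ n) := by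
        rw [← hp.map_pow_two_pow (ha.mul hb), mul_pow]
    _ ≤ 2 * p (a ^ 2 ^ n) * p (b ^ 2 ^ n) := hp.map_mul_le_two_mul (ha.pow _) (hb.pow _)
    _ = 2 * (p a * p b) ^ 2 ^ n := by
        rw [hp.map_pow_two_pow ha, hp.map_pow_two_pow hb, mul_pow, mul_assoc]

theorem IsCStar.map_mul_le (hp : p.IsCStar) (x y : A) : p (x * y) ≤ p x * p y := by
  refine (pow_le_pow_iff_left₀ (apply_nonneg p _)
    (mul_nonneg (apply_nonneg p x) (apply_nonneg p y)) two_ne_zero).mp ?_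
  calc p (x * y) ^ 2 = p (x * star x * (y * star y)) := by
        rw [← hp, star_mul]; ring_nf
    _ ≤ p (x * star x) * p (y * star y) :=
        hp.map_mul_le_of_isSelfAdjoint (.mul_star_self x) (.mul_star_self y)
    _ = (p x * p y) ^ 2 := by rw [hp x, hp y, mul_pow]

theorem IsCStar.map_one (hp : p.IsCStar) (h0 : p ≠ 0) : p 1 = 1 := by
  have h1 : p 1 * (p 1 - 1) = 0 := by
    have := hp 1
    rw [star_one, one_mul] at this
    linear_combination -this
  rcases mul_eq_zero.1 h1 with h | h
  · refine absurd (ext fun x ↦ le_antisymm ?_ (apply_nonneg p x)) h0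
    simpa [h] using hp.map_mul_le x 1
  · linarith

end Seminorm

/-- basic properties of C*-seminorms on a commutative unital complex *-algebra. -/
theorem cstar_seminorm_basic {A : Type*} [CommRing A] [Algebra ℂ A] [StarRing A]
    [StarModule ℂ A] (p : Seminorm ℂ A) (hC : ∀ x : A, p (x * star x) = p x ^ 2) :
    (p ≠ 0 → p 1 = 1) ∧ (∀ x : A, p (star x) = p x) ∧ (∀ x y : A, p (x * y) ≤ p x * p y) := by
  have hp : p.IsCStar := hC
  exact ⟨hp.map_one, hp.map_star, hp.map_mul_le⟩
end

section
/- Let p and q be C*-seminorms on a commutative unital *-algebra A. The following are equivalent: (a) q is continuous with respect to p; (b) X*_q(A) ⊆ X*_p(A); (c) q ≤ p pointwise. Consequently, q = p if and only if X*_q(A) = X*_p(A). -/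
/-!
The C*-identity `q (a ^ 2 ^ n) = q a ^ 2 ^ n` for self-adjoint `a` turns any bound of the form
`c ^ 2 ^ n ≤ K * d ^ 2 ^ n` into `c ≤ d`. Combined with polarization this makes a C*-seminorm
submultiplicative, so the completion of `(A, q)` is a commutative C*-algebra, and Gelfand theory
produces for each `x` a character `χ` with `|χ| ≤ q` and `|χ x| = q x` (unless `q = 0`). The same
power trick shows that a character is `p`-continuous exactly when `|χ| ≤ p`. Hence
`X*_q(A) ⊆ X*_p(A)` forces `q ≤ p`; the remaining implications are ε-δ bookkeeping.
-/

/-- `p`-continuity of a Hermitian character (ε-δ form of continuity w.r.t. the seminorm `p`). -/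
def PCont {A : Type*} [CommRing A] [Algebra ℂ A] [StarRing A] [StarModule ℂ A]
    (p : Seminorm ℂ A) (χ : A →⋆ₐ[ℂ] ℂ) : Prop :=
  ∀ ε > (0 : ℝ), ∃ δ > (0 : ℝ), ∀ x : A, p x < δ → ‖χ x‖ < ε

open Filter Topology

lemma le_of_forall_pow_two_pow_le_mul {c d K : ℝ} (hd : 0 ≤ d)
    (h : ∀ n : ℕ, c ^ 2 ^ n ≤ K * d ^ 2 ^ n) : c ≤ d := by
  by_contra! hdc
  have hc : 0 < c := hd.trans_lt hdc
  have hlim : Tendsto (fun n : ℕ => K * (d / c) ^ 2 ^ n) atTop (𝓝 0) := by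
    simpa using ((tendsto_pow_atTop_nhds_zero_of_lt_one (div_nonneg hd hc.le)
      ((div_lt_one hc).2 hdc)).comp (tendsto_pow_atTop_atTop_of_one_lt one_lt_two)).const_mul K
  obtain ⟨n, hn⟩ := (hlim.eventually (gt_mem_nhds one_pos)).exists
  have hcn : 0 < c ^ 2 ^ n := by positivity
  rw [div_pow, ← mul_div_assoc, div_lt_one hcn] at hn
  exact (h n).not_gt hn

lemma le_mul_of_forall_pos_le_add_mul_add {c x y : ℝ} (h : ∀ ε > 0, c ≤ (x + ε) * (y + ε)) :
    c ≤ x * y := by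
  have hlim : Tendsto (fun ε => (x + ε) * (y + ε)) (𝓝[>] 0) (𝓝 (x * y)) := by
    have : Continuous (fun ε : ℝ => (x + ε) * (y + ε)) := by fun_prop
    simpa using (this.tendsto 0).mono_left nhdsWithin_le_nhds
  exact ge_of_tendsto hlim (eventually_nhdsWithin_of_forall h)

def IsCStarSeminorm {A : Type*} [CommRing A] [StarRing A] [Algebra ℂ A] (q : Seminorm ℂ A) :
    Prop :=
  ∀ x : A, q (x * star x) = q x ^ 2

namespace IsCStarSeminorm

variable {A : Type*} [CommRing A] [StarRing A] [Algebra ℂ A] {q : Seminorm ℂ A}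
  (hq : IsCStarSeminorm q)
include hq

lemma map_star (x : A) : q (star x) = q x := by
  have h := hq (star x)
  rw [star_star, mul_comm, hq x] at h
  exact ((pow_left_inj₀ (apply_nonneg q x) (apply_nonneg q _) two_ne_zero).1 h).symm

lemma map_mul_self {a : A} (ha : IsSelfAdjoint a) : q (a * a) = q a ^ 2 := by
  simpa only [ha.star_eq] using hq a

lemma map_pow_two_pow {a : A} (ha : IsSelfAdjoint a) (n : ℕ) : q (a ^ 2 ^ n) = q a ^ 2 ^ n := by
  induction n with
  | zero => simp
  | succ n ih => rw [pow_succ, pow_mul, sq, hq.map_mul_self (ha.pow _), ih, ← pow_mul, ← pow_succ]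

lemma two_mul_map_mul_le {a b : A} (ha : IsSelfAdjoint a) (hb : IsSelfAdjoint b) :
    2 * q (a * b) ≤ (q a + q b) ^ 2 := by
  have hpol : (4 : ℂ) • (a * b) = (a + b) * (a + b) - (a - b) * (a - b) := by
    rw [Algebra.smul_def, map_ofNat]
    ring
  have h4 : q ((4 : ℂ) • (a * b)) = 4 * q (a * b) := by
    rw [map_smul_eq_mul]
    norm_num
  have hsum : q ((a + b) * (a + b)) ≤ (q a + q b) ^ 2 := by
    rw [hq.map_mul_self (ha.add hb)]
    exact pow_le_pow_left₀ (apply_nonneg q _) (map_add_le_add q a b) 2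
  have hdiff : q ((a - b) * (a - b)) ≤ (q a + q b) ^ 2 := by
    rw [hq.map_mul_self (ha.sub hb)]
    exact pow_le_pow_left₀ (apply_nonneg q _) (map_sub_le_add q a b) 2
  have := map_sub_le_add q ((a + b) * (a + b)) ((a - b) * (a - b))
  rw [← hpol, h4] at this
  linarith

lemma map_mul_le_one_of_isSelfAdjoint {a b : A} (ha : IsSelfAdjoint a) (hb : IsSelfAdjoint b)
    (ha1 : q a ≤ 1) (hb1 : q b ≤ 1) : q (a * b) ≤ 1 := by
  refine le_of_forall_pow_two_pow_le_mul (K := 2) zero_le_one fun n => ?_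
  have han := (hq.map_pow_two_pow ha n).trans_le (pow_le_one₀ (apply_nonneg q a) ha1)
  have hbn := (hq.map_pow_two_pow hb n).trans_le (pow_le_one₀ (apply_nonneg q b) hb1)
  have := hq.two_mul_map_mul_le (ha.pow (2 ^ n)) (hb.pow (2 ^ n))
  rw [← mul_pow, hq.map_pow_two_pow (ha.mul hb)] at this
  rw [one_pow, mul_one]
  nlinarith [apply_nonneg q (a ^ 2 ^ n), apply_nonneg q (b ^ 2 ^ n)]

lemma map_one_eq_zero_or_eq_one : q 1 = 0 ∨ q 1 = 1 := by
  have h := hq 1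
  rw [star_one, mul_one, sq] at h
  exact IsIdempotentElem.iff_eq_zero_or_one.1 h.symm

variable [StarModule ℂ A]

lemma map_mul_le_of_isSelfAdjoint {a b : A} (ha : IsSelfAdjoint a) (hb : IsSelfAdjoint b) :
    q (a * b) ≤ q a * q b := by
  refine le_mul_of_forall_pos_le_add_mul_add fun ε hε => ?_
  have hs : 0 < q a + ε := by positivity
  have ht : 0 < q b + ε := by positivity
  have hreal (r : ℝ) : IsSelfAdjoint (r : ℂ) := Complex.conj_ofReal r
  have hnorm {r : ℝ} (hr : 0 < r) : ‖((r⁻¹ : ℝ) : ℂ)‖ = r⁻¹ := by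
    rw [Complex.norm_real, Real.norm_of_nonneg (inv_nonneg.2 hr.le)]
  have key := hq.map_mul_le_one_of_isSelfAdjoint ((hreal (q a + ε)⁻¹).smul ha)
    ((hreal (q b + ε)⁻¹).smul hb)
    (by rw [map_smul_eq_mul, hnorm hs, inv_mul_le_one₀ hs]; linarith)
    (by rw [map_smul_eq_mul, hnorm ht, inv_mul_le_one₀ ht]; linarith)
  rw [smul_mul_smul_comm, map_smul_eq_mul, norm_mul, hnorm hs, hnorm ht, ← mul_inv,
    inv_mul_le_one₀ (by positivity)] at key
  exact key

lemma map_mul_le (x y : A) : q (x * y) ≤ q x * q y := by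
  have h := hq.map_mul_le_of_isSelfAdjoint (.mul_star_self x) (.mul_star_self y)
  rw [hq, hq, ← mul_pow, show x * star x * (y * star y) = x * y * star (x * y) by
    rw [star_mul]; ring, hq] at h
  exact (pow_le_pow_iff_left₀ (apply_nonneg q _) (by positivity) two_ne_zero).1 h

lemma eq_zero_of_map_one_eq_zero (h : q 1 = 0) (x : A) : q x = 0 :=
  le_antisymm (by simpa [h] using hq.map_mul_le x 1) (apply_nonneg q x)

end IsCStarSeminorm

namespace UniformSpace.Completion

variable {R : Type*} [CommRing R] [StarRing R] [UniformSpace R] [IsUniformAddGroup R]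
  [IsTopologicalRing R] [ContinuousStar R]

noncomputable instance : Star (Completion R) := ⟨mapRingHom (starRingEnd R) continuous_star⟩

lemma star_coe (x : R) : star (x : Completion R) = ↑(star x) := mapRingHom_coe _ x

instance : ContinuousStar (Completion R) := ⟨continuous_map⟩

noncomputable instance : StarRing (Completion R) where
  star_involutive x := by
    induction x using Completion.induction_on with
    | hp => exact isClosed_eq (continuous_star.comp continuous_star) continuous_id
    | ih x => rw [star_coe, star_coe, star_star]
  star_mul x y := (map_mul (mapRingHom (starRingEnd R) continuous_star) x y).trans (mul_comm _ _)
  star_add := map_add (mapRingHom (starRingEnd R) continuous_star)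

instance {S : Type*} [CommSemiring S] [StarRing S] [Algebra S R] [StarModule S R]
    [UniformContinuousConstSMul S R] : StarModule S (Completion R) where
  star_smul c x := by
    induction x using Completion.induction_on with
    | hp =>
      exact isClosed_eq (continuous_star.comp (continuous_const_smul c))
        ((continuous_const_smul _).comp continuous_star)
    | ih x => rw [← coe_smul, star_coe, star_coe, star_smul, coe_smul]

end UniformSpace.Completion

open UniformSpace (Completion)

def WithSeminorm {A : Type*} [AddGroup A] [SMul ℂ A] (_q : Seminorm ℂ A) : Type _ := A

namespace WithSeminorm

variable {A : Type*} [CommRing A] [StarRing A] [Algebra ℂ A] (q : Seminorm ℂ A)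

instance : CommRing (WithSeminorm q) := inferInstanceAs (CommRing A)
instance : StarRing (WithSeminorm q) := inferInstanceAs (StarRing A)
instance : Algebra ℂ (WithSeminorm q) := inferInstanceAs (Algebra ℂ A)

variable [StarModule ℂ A]

instance : StarModule ℂ (WithSeminorm q) := inferInstanceAs (StarModule ℂ A)

variable [hq : Fact (IsCStarSeminorm q)]

noncomputable instance : SeminormedCommRing (WithSeminorm q) :=
  { AddGroupSeminorm.toSeminormedAddCommGroup (E := WithSeminorm q) q.toAddGroupSeminorm,
    (inferInstance : CommRing (WithSeminorm q)) with
    norm_mul_le := hq.out.map_mul_le (A := A) }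

noncomputable instance : NormedAlgebra ℂ (WithSeminorm q) where
  norm_smul_le c x := (map_smul_eq_mul q c (show A from x)).le

instance : NormedStarGroup (WithSeminorm q) := ⟨fun x => (hq.out.map_star (A := A) x).le⟩

instance : CStarRing (Completion (WithSeminorm q)) where
  norm_mul_self_le x := by
    induction x using Completion.induction_on with
    | hp => exact isClosed_le (by fun_prop) (by fun_prop)
    | ih x =>
      rw [Completion.star_coe, ← Completion.coe_mul, Completion.norm_coe, Completion.norm_coe,
        ← sq, mul_comm (star x)]
      exact (hq.out x).ge

noncomputable instance : CommCStarAlgebra (Completion (WithSeminorm q)) where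

noncomputable def toCompletion : A →⋆ₐ[ℂ] Completion (WithSeminorm q) :=
  { (Completion.coeRingHom : WithSeminorm q →+* Completion (WithSeminorm q)) with
    commutes' := fun _ => rfl
    map_star' := fun x => (Completion.star_coe (show WithSeminorm q from x)).symm }

lemma norm_toCompletion (x : A) : ‖toCompletion q x‖ = q x := Completion.norm_coe _

end WithSeminorm

lemma CommCStarAlgebra.exists_characterSpace_norm_apply_eq {B : Type*} [CommCStarAlgebra B]
    [Nontrivial B] (b : B) : ∃ φ : WeakDual.characterSpace ℂ B, ‖φ b‖ = ‖b‖ := by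
  have : IsStarNormal b := ⟨Commute.all _ _⟩
  obtain ⟨z, hz, hzb⟩ := spectrum.exists_nnnorm_eq_spectralRadius b
  rw [IsStarNormal.spectralRadius_eq_nnnorm] at hzb
  obtain ⟨φ, rfl⟩ := WeakDual.CharacterSpace.mem_spectrum_iff_exists.1 hz
  exact ⟨φ, congrArg NNReal.toReal (ENNReal.coe_injective hzb)⟩

namespace IsCStarSeminorm

variable {A : Type*} [CommRing A] [StarRing A] [Algebra ℂ A] [StarModule ℂ A]
  {p q : Seminorm ℂ A}

lemma exists_starAlgHom_norm_apply_eq (hq : IsCStarSeminorm q) (h1 : q 1 = 1) (x : A) :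
    ∃ χ : A →⋆ₐ[ℂ] ℂ, (∀ a, ‖χ a‖ ≤ q a) ∧ ‖χ x‖ = q x := by
  have : Fact (IsCStarSeminorm q) := ⟨hq⟩
  have : Nontrivial (Completion (WithSeminorm q)) := by
    refine ⟨⟨1, 0, fun h => ?_⟩⟩
    have := WithSeminorm.norm_toCompletion q 1
    rw [map_one, h, norm_zero, h1] at this
    exact zero_ne_one this
  obtain ⟨φ, hφ⟩ := CommCStarAlgebra.exists_characterSpace_norm_apply_eq
    (WithSeminorm.toCompletion q x)
  refine ⟨(φ : _ →⋆ₐ[ℂ] ℂ).comp (WithSeminorm.toCompletion q), fun a => ?_, ?_⟩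
  · exact (spectrum.norm_le_norm_of_mem (WeakDual.CharacterSpace.apply_mem_spectrum φ _)).trans_eq
      (WithSeminorm.norm_toCompletion q a)
  · exact hφ.trans (WithSeminorm.norm_toCompletion q x)

end IsCStarSeminorm

namespace PCont

variable {A : Type*} [CommRing A] [StarRing A] [Algebra ℂ A] [StarModule ℂ A]
  {p q : Seminorm ℂ A} {χ : A →⋆ₐ[ℂ] ℂ}

lemma of_norm_apply_le (h : ∀ x, ‖χ x‖ ≤ p x) : PCont p χ :=
  fun ε hε => ⟨ε, hε, fun x hx => (h x).trans_lt hx⟩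

lemma of_seminorm_continuous (hqp : ∀ ε > (0 : ℝ), ∃ δ > (0 : ℝ), ∀ x : A, p x < δ → q x < ε)
    (hχ : PCont q χ) : PCont p χ := fun ε hε =>
  let ⟨η, hη, hqχ⟩ := hχ ε hε
  let ⟨δ, hδ, hpq⟩ := hqp η hη
  ⟨δ, hδ, fun x hx => hqχ x (hpq x hx)⟩

lemma exists_norm_apply_le_mul (hχ : PCont p χ) : ∃ C, ∀ x, ‖χ x‖ ≤ C * p x := by
  obtain ⟨δ, hδ, h⟩ := hχ 1 one_pos
  refine ⟨δ⁻¹, fun x => ?_⟩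
  rw [← div_eq_inv_mul, le_div_iff₀' hδ]
  refine le_of_forall_gt fun s hs => ?_
  have hs0 : 0 < s := (apply_nonneg p x).trans_lt hs
  have hnorm : ‖((δ / s : ℝ) : ℂ)‖ = δ / s := by
    rw [Complex.norm_real, Real.norm_of_nonneg (by positivity)]
  have := h (((δ / s : ℝ) : ℂ) • x) (by
    rw [map_smul_eq_mul, hnorm, div_mul_eq_mul_div, div_lt_iff₀ hs0]
    exact mul_lt_mul_of_pos_left hs hδ)
  rw [map_smul, norm_smul, hnorm, div_mul_eq_mul_div, div_lt_one hs0] at this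
  exact this

lemma norm_apply_le (hp : IsCStarSeminorm p) (hχ : PCont p χ) (x : A) : ‖χ x‖ ≤ p x := by
  obtain ⟨C, hC⟩ := hχ.exists_norm_apply_le_mul
  have hsa (y : A) (hy : IsSelfAdjoint y) : ‖χ y‖ ≤ p y :=
    le_of_forall_pow_two_pow_le_mul (K := C) (apply_nonneg p y) fun n => by
      have := hC (y ^ 2 ^ n)
      rwa [map_pow, norm_pow, hp.map_pow_two_pow hy] at this
  have := hsa _ (.mul_star_self x)
  rw [map_mul, map_star, norm_mul, norm_star, hp, ← sq] at this
  exact (pow_le_pow_iff_left₀ (norm_nonneg _) (apply_nonneg p x) two_ne_zero).1 this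

end PCont

lemma IsCStarSeminorm.le_of_setOf_pcont_subset {A : Type*} [CommRing A] [StarRing A]
    [Algebra ℂ A] [StarModule ℂ A] {p q : Seminorm ℂ A} (hp : IsCStarSeminorm p)
    (hq : IsCStarSeminorm q) (h : {χ : A →⋆ₐ[ℂ] ℂ | PCont q χ} ⊆ {χ | PCont p χ}) (x : A) :
    q x ≤ p x := by
  rcases hq.map_one_eq_zero_or_eq_one with h0 | h1
  · exact (hq.eq_zero_of_map_one_eq_zero h0 x).trans_le (apply_nonneg p x)
  · obtain ⟨χ, hχq, hχx⟩ := hq.exists_starAlgHom_norm_apply_eq h1 x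
    exact hχx ▸ (h (PCont.of_norm_apply_le hχq)).norm_apply_le hp x

/-- for C*-seminorms `p`, `q`: `q` is `p`-continuous ↔ `X*_q(A) ⊆ X*_p(A)`
↔ `q ≤ p` pointwise; and `q = p ↔ X*_q(A) = X*_p(A)`. -/
theorem cstar_seminorm_comparison {A : Type*} [CommRing A] [Algebra ℂ A] [StarRing A]
    [StarModule ℂ A] (p q : Seminorm ℂ A)
    (hp : ∀ x : A, p (x * star x) = p x ^ 2) (hq : ∀ x : A, q (x * star x) = q x ^ 2) :
    ((∀ ε > (0 : ℝ), ∃ δ > (0 : ℝ), ∀ x : A, p x < δ → q x < ε) ↔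
      {χ : A →⋆ₐ[ℂ] ℂ | PCont q χ} ⊆ {χ : A →⋆ₐ[ℂ] ℂ | PCont p χ}) ∧
    (({χ : A →⋆ₐ[ℂ] ℂ | PCont q χ} ⊆ {χ : A →⋆ₐ[ℂ] ℂ | PCont p χ}) ↔ ∀ x : A, q x ≤ p x) ∧
    (q = p ↔ {χ : A →⋆ₐ[ℂ] ℂ | PCont q χ} = {χ : A →⋆ₐ[ℂ] ℂ | PCont p χ}) := by
  have hca (h : ∀ x, q x ≤ p x) : ∀ ε > (0 : ℝ), ∃ δ > (0 : ℝ), ∀ x : A, p x < δ → q x < ε :=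
    fun ε hε => ⟨ε, hε, fun x hx => (h x).trans_lt hx⟩
  have hab (h : ∀ ε > (0 : ℝ), ∃ δ > (0 : ℝ), ∀ x : A, p x < δ → q x < ε) :
      {χ : A →⋆ₐ[ℂ] ℂ | PCont q χ} ⊆ {χ | PCont p χ} := fun _ => PCont.of_seminorm_continuous h
  have hbc := IsCStarSeminorm.le_of_setOf_pcont_subset hp hq
  refine ⟨⟨hab, hca ∘ hbc⟩, ⟨hbc, hab ∘ hca⟩, ⟨fun h => h ▸ rfl, fun h => ?_⟩⟩
  exact le_antisymm (hbc h.le) (IsCStarSeminorm.le_of_setOf_pcont_subset hq hp h.ge)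
end

section
/- Let A be a commutative unital *-algebra and S a nonempty subset of the Hermitian character space X*(A) that is A-bounded (sup{|χ(a)| : χ ∈ S} < ∞ for each a). Define p^S(a) = sup{|χ(a)| : χ ∈ S}. Then p^S is a C*-seminorm on A, and X*_{p^S}(A) equals the closure of S in X*(A) with the topology of pointwise convergence. -/
open Metric Set

/-- for a nonempty `A`-bounded set `S` of Hermitian characters,
`p^S(a) = sup {|χ a| : χ ∈ S}` is a C*-seminorm and `X*_{p^S}(A)` equals the closure of `S`
in the topology of pointwise convergence. -/
theorem sup_seminorm_of_bounded_character_set {A : Type*} [CommRing A] [Algebra ℂ A]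
    [StarRing A] [StarModule ℂ A] (S : Set (A →⋆ₐ[ℂ] ℂ)) (hne : S.Nonempty)
    (hb : ∀ a : A, ∃ C : ℝ, ∀ χ ∈ S, ‖χ a‖ ≤ C) :
    ∃ p : Seminorm ℂ A,
      (∀ a : A, p a = sSup ((fun χ : A →⋆ₐ[ℂ] ℂ => ‖χ a‖) '' S)) ∧
      (∀ x : A, p (x * star x) = p x ^ 2) ∧
      {f : A → ℂ | ∃ χ : A →⋆ₐ[ℂ] ℂ, PCont p χ ∧ f = ⇑χ} =
        closure ((fun χ : A →⋆ₐ[ℂ] ℂ => (⇑χ : A → ℂ)) '' S) := by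
  classical
  have hbdd : ∀ a : A, BddAbove ((fun χ : A →⋆ₐ[ℂ] ℂ => ‖χ a‖) '' S) := by
    intro a; obtain ⟨C, hC⟩ := hb a
    exact ⟨C, by rintro _ ⟨χ, hχ, rfl⟩; exact hC χ hχ⟩
  have hne' : ∀ a : A, ((fun χ : A →⋆ₐ[ℂ] ℂ => ‖χ a‖) '' S).Nonempty := fun a => hne.image _
  set q : A → ℝ := fun a => sSup ((fun χ : A →⋆ₐ[ℂ] ℂ => ‖χ a‖) '' S) with hqdef
  have hle : ∀ a : A, ∀ χ ∈ S, ‖χ a‖ ≤ q a := fun a χ hχ => le_csSup (hbdd a) ⟨χ, hχ, rfl⟩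
  have hsup_le : ∀ (a : A) (C : ℝ), (∀ χ ∈ S, ‖χ a‖ ≤ C) → q a ≤ C := by
    intro a C h
    exact csSup_le (hne' a) (by rintro _ ⟨χ, hχ, rfl⟩; exact h χ hχ)
  have hq0 : ∀ a, 0 ≤ q a :=
    fun a => le_trans (norm_nonneg _) (hle a hne.choose hne.choose_spec)
  -- the seminorm
  have hqsmul : ∀ (c : ℂ) (x : A), q (c • x) = ‖c‖ * q x := by
    intro c x
    rcases eq_or_ne c 0 with rfl | hc
    · simp only [zero_smul, norm_zero, zero_mul]
      refine le_antisymm (hsup_le 0 0 fun χ _ => by simp) (hq0 0)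
    · refine le_antisymm (hsup_le _ _ fun χ hχ => ?_) ?_
      · rw [map_smul, norm_smul]
        exact mul_le_mul_of_nonneg_left (hle x χ hχ) (norm_nonneg c)
      · have h1 : q x ≤ ‖c‖⁻¹ * q (c • x) := by
          refine hsup_le _ _ fun χ hχ => ?_
          have : ‖χ (c • x)‖ = ‖c‖ * ‖χ x‖ := by rw [map_smul, norm_smul]
          have h2 := hle (c • x) χ hχ
          rw [this] at h2
          rw [le_inv_mul_iff₀ (norm_pos_iff.mpr hc)]
          linarith
        calc ‖c‖ * q x ≤ ‖c‖ * (‖c‖⁻¹ * q (c • x)) :=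
              mul_le_mul_of_nonneg_left h1 (norm_nonneg c)
          _ = q (c • x) := by
              rw [← mul_assoc, mul_inv_cancel₀ (norm_pos_iff.mpr hc).ne', one_mul]
  set p : Seminorm ℂ A :=
    { toFun := q
      map_zero' := le_antisymm (hsup_le 0 0 fun χ _ => by simp) (hq0 0)
      add_le' := fun x y => hsup_le _ _ fun χ hχ => by
        rw [map_add]
        exact (norm_add_le _ _).trans (add_le_add (hle x χ hχ) (hle y χ hχ))
      neg' := fun x => by
        have : (fun χ : A →⋆ₐ[ℂ] ℂ => ‖χ (-x)‖) = fun χ => ‖χ x‖ := by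
          funext χ; rw [map_neg, norm_neg]
        simp only [hqdef, this]
      smul' := hqsmul } with hpdef
  have hp : ∀ a, p a = q a := fun a => rfl
  refine ⟨p, fun a => rfl, ?_, ?_⟩
  · -- C* property
    intro x
    have key : ∀ χ : A →⋆ₐ[ℂ] ℂ, ‖χ (x * star x)‖ = ‖χ x‖ ^ 2 := by
      intro χ
      rw [map_mul, map_star, norm_mul]
      have : ‖star (χ x)‖ = ‖χ x‖ := norm_star _
      rw [this, sq]
    rw [hp, hp]
    refine le_antisymm (hsup_le _ _ fun χ hχ => ?_) ?_
    · rw [key χ]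
      exact pow_le_pow_left₀ (norm_nonneg _) (hle x χ hχ) 2
    · have h1 : q x ≤ Real.sqrt (q (x * star x)) := by
        refine hsup_le _ _ fun χ hχ => ?_
        have h2 : ‖χ x‖ ^ 2 ≤ q (x * star x) := by
          rw [← key χ]; exact hle _ χ hχ
        have := Real.sqrt_le_sqrt h2
        rwa [Real.sqrt_sq (norm_nonneg _)] at this
      calc q x ^ 2 ≤ Real.sqrt (q (x * star x)) ^ 2 :=
            pow_le_pow_left₀ (hq0 x) h1 2
        _ = q (x * star x) := Real.sq_sqrt (hq0 _)
  · -- the set equality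
    -- the closed set of "characters dominated by q"
    set Φ : Set (A → ℂ) := {f : A → ℂ | f 1 = 1 ∧ (∀ x y, f (x * y) = f x * f y) ∧
        (∀ x y, f (x + y) = f x + f y) ∧ (∀ c : ℂ, f (algebraMap ℂ A c) = c) ∧
        (∀ x, f (star x) = starRingEnd ℂ (f x)) ∧ (∀ a, ‖f a‖ ≤ q a)} with hΦdef
    have hΦclosed : IsClosed Φ := by
      have hrw : Φ = {f : A → ℂ | f 1 = 1} ∩
          (⋂ (x : A) (y : A), {f : A → ℂ | f (x * y) = f x * f y}) ∩
          (⋂ (x : A) (y : A), {f : A → ℂ | f (x + y) = f x + f y}) ∩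
          (⋂ c : ℂ, {f : A → ℂ | f (algebraMap ℂ A c) = c}) ∩
          (⋂ x : A, {f : A → ℂ | f (star x) = starRingEnd ℂ (f x)}) ∩
          (⋂ a : A, {f : A → ℂ | ‖f a‖ ≤ q a}) := by
        ext f
        simp only [hΦdef, Set.mem_setOf_eq, Set.mem_inter_iff, Set.mem_iInter]
        tauto
      rw [hrw]
      refine ((((IsClosed.inter ?_ ?_).inter ?_).inter ?_).inter ?_).inter ?_
      · exact isClosed_eq (continuous_apply 1) continuous_const
      · exact isClosed_iInter fun x => isClosed_iInter fun y =>
          isClosed_eq (continuous_apply _) ((continuous_apply x).mul (continuous_apply y))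
      · exact isClosed_iInter fun x => isClosed_iInter fun y =>
          isClosed_eq (continuous_apply _) ((continuous_apply x).add (continuous_apply y))
      · exact isClosed_iInter fun c => isClosed_eq (continuous_apply _) continuous_const
      · exact isClosed_iInter fun x => isClosed_eq (continuous_apply _)
          (Complex.continuous_conj.comp (continuous_apply x))
      · exact isClosed_iInter fun a => isClosed_le ((continuous_apply a).norm) continuous_const
    have hSΦ : (fun χ : A →⋆ₐ[ℂ] ℂ => (⇑χ : A → ℂ)) '' S ⊆ Φ := by
      rintro _ ⟨χ, hχ, rfl⟩
      refine ⟨map_one χ, fun x y => map_mul χ x y, fun x y => map_add χ x y,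
        fun c => χ.commutes c, fun x => map_star χ x, fun a => hle a χ hχ⟩
    have hKΦ : closure ((fun χ : A →⋆ₐ[ℂ] ℂ => (⇑χ : A → ℂ)) '' S) ⊆ Φ :=
      closure_minimal hSΦ hΦclosed
    -- every element of Φ is a p-continuous character
    have mk_char : ∀ f ∈ Φ, ∃ χ : A →⋆ₐ[ℂ] ℂ, PCont p χ ∧ f = ⇑χ := by
      rintro f ⟨h1, hmul, hadd, hcomm, hstar, hbd⟩
      have hf0 : f 0 = 0 := by simpa using hcomm 0
      refine ⟨{ toFun := f
                map_one' := h1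
                map_mul' := hmul
                map_zero' := hf0
                map_add' := hadd
                commutes' := hcomm
                map_star' := hstar }, ?_, rfl⟩
      intro ε hε
      exact ⟨ε, hε, fun x hx => lt_of_le_of_lt (hbd x) hx⟩
    -- p-continuous characters are dominated by q
    have hdom : ∀ χ : A →⋆ₐ[ℂ] ℂ, PCont p χ → ∀ a, ‖χ a‖ ≤ q a := by
      intro χ hχ a
      by_contra hlt
      push_neg at hlt
      obtain ⟨δ, hδ, hδ'⟩ := hχ 1 one_pos
      have hna : (0:ℝ) < ‖χ a‖ := lt_of_le_of_lt (hq0 a) hlt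
      set r : ℝ := (q a + ‖χ a‖) / 2 with hrdef
      have hr0 : 0 < r := by have := hq0 a; simp only [hrdef]; linarith
      have hqar : q a < r := by simp only [hrdef]; linarith
      have hrna : r < ‖χ a‖ := by simp only [hrdef]; linarith
      set b : A := (r : ℂ)⁻¹ • a with hbdef
      have hqb : q b < 1 := by
        have : q b = ‖(r:ℂ)⁻¹‖ * q a := hqsmul _ _
        rw [this]
        have : ‖(r:ℂ)⁻¹‖ = r⁻¹ := by
          rw [norm_inv, Complex.norm_real, Real.norm_of_nonneg hr0.le]
        rw [this, inv_mul_lt_iff₀ hr0, mul_one]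
        exact hqar
      have hχb : 1 < ‖χ b‖ := by
        have : χ b = (r:ℂ)⁻¹ * χ a := by rw [hbdef, map_smul, smul_eq_mul]
        rw [this, norm_mul, norm_inv, Complex.norm_real, Real.norm_of_nonneg hr0.le]
        rw [lt_inv_mul_iff₀ hr0, mul_one]
        exact hrna
      obtain ⟨n, hn⟩ := exists_pow_lt_of_lt_one hδ hqb
      have hqbn : q (b ^ n) ≤ q b ^ n := by
        refine hsup_le _ _ fun φ hφ => ?_
        rw [map_pow, norm_pow]
        exact pow_le_pow_left₀ (norm_nonneg _) (hle b φ hφ) n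
      have h1 : ‖χ (b ^ n)‖ < 1 := hδ' _ (lt_of_le_of_lt hqbn hn)
      have h2 : 1 ≤ ‖χ (b ^ n)‖ := by
        rw [map_pow, norm_pow]
        simpa using pow_le_pow_left₀ zero_le_one hχb.le n
      linarith
    -- now the set equality
    ext f
    simp only [Set.mem_setOf_eq]
    constructor
    · rintro ⟨χ, hχ, rfl⟩
      -- Stone–Weierstrass direction
      by_contra hnotin
      set K := closure ((fun χ : A →⋆ₐ[ℂ] ℂ => (⇑χ : A → ℂ)) '' S) with hKdef
      set W : Set (A → ℂ) := Set.pi Set.univ (fun a => closedBall (0:ℂ) (q a)) with hWdef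
      have hWc : IsCompact W := isCompact_univ_pi fun a => isCompact_closedBall _ _
      have hΦW : Φ ⊆ W := by
        rintro g ⟨-, -, -, -, -, hg⟩ a -
        simpa [mem_closedBall, dist_eq_norm] using hg a
      have hKc : IsCompact K := hWc.of_isClosed_subset isClosed_closure
        (subset_trans hKΦ hΦW)
      set L : Set (A → ℂ) := insert (⇑χ) K with hLdef
      have hLc : IsCompact L := by
        rw [hLdef, Set.insert_eq]
        exact isCompact_singleton.union hKc
      haveI : CompactSpace L := isCompact_iff_compactSpace.mp hLc
      have hLΦ : L ⊆ Φ := by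
        rintro g (rfl | hg)
        · exact ⟨map_one χ, fun x y => map_mul χ x y, fun x y => map_add χ x y,
            fun c => χ.commutes c, fun x => map_star χ x, hdom χ hχ⟩
        · exact hKΦ hg
      -- the Gelfand star algebra homomorphism
      set Ψ : A →⋆ₐ[ℂ] C(L, ℂ) :=
        { toFun := fun a => ⟨fun x => x.1 a, (continuous_apply a).comp continuous_subtype_val⟩
          map_one' := ContinuousMap.ext fun x => (hLΦ x.2).1
          map_mul' := fun a b => ContinuousMap.ext fun x => (hLΦ x.2).2.1 a b
          map_zero' := ContinuousMap.ext fun x => by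
            have := (hLΦ x.2).2.2.2.1 0
            simpa using this
          map_add' := fun a b => ContinuousMap.ext fun x => (hLΦ x.2).2.2.1 a b
          commutes' := fun c => ContinuousMap.ext fun x => by
            have := (hLΦ x.2).2.2.2.1 c
            simpa using this
          map_star' := fun a => ContinuousMap.ext fun x => (hLΦ x.2).2.2.2.2.1 a } with hΨdef
      have hsep : Ψ.range.SeparatesPoints := by
        intro x y hxy
        have : ∃ a : A, x.1 a ≠ y.1 a := by
          by_contra h
          push_neg at h
          exact hxy (Subtype.ext (funext h))
        obtain ⟨a, ha⟩ := this
        exact ⟨_, ⟨Ψ a, ⟨a, rfl⟩, rfl⟩, ha⟩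
      have hdense := ContinuousMap.starSubalgebra_topologicalClosure_eq_top_of_separatesPoints
        Ψ.range hsep
      -- Urysohn
      have hχL : (⇑χ : A → ℂ) ∈ L := Set.mem_insert _ _
      have hKcl : IsClosed {x : L | (x : A → ℂ) ∈ K} :=
        isClosed_closure.preimage continuous_subtype_val
      have hdisj : Disjoint {x : L | (x : A → ℂ) ∈ K} ({⟨⇑χ, hχL⟩} : Set L) := by
        rw [Set.disjoint_singleton_right]
        exact hnotin
      obtain ⟨g, hg0, hg1, -⟩ :=
        exists_continuous_zero_one_of_isClosed hKcl isClosed_singleton hdisj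
      set gC : C(L, ℂ) := ContinuousMap.comp ⟨Complex.ofReal, Complex.continuous_ofReal⟩ g
        with hgCdef
      have hgC : gC ∈ closure (Ψ.range : Set C(L, ℂ)) := by
        have : gC ∈ Ψ.range.topologicalClosure := by rw [hdense]; trivial
        exact this
      rw [Metric.mem_closure_iff] at hgC
      obtain ⟨b, hbmem, hbdist⟩ := hgC (1/2) (by norm_num)
      obtain ⟨a, rfl⟩ := hbmem
      -- evaluate at χ
      have hx0 : dist (gC ⟨⇑χ, hχL⟩) (Ψ a ⟨⇑χ, hχL⟩) < 1/2 :=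
        lt_of_le_of_lt (ContinuousMap.dist_apply_le_dist _) hbdist
      have hgC1 : gC ⟨⇑χ, hχL⟩ = 1 := by
        have := hg1 (Set.mem_singleton _)
        simp only [hgCdef, ContinuousMap.comp_apply, ContinuousMap.coe_mk]
        rw [this]
        norm_num
      have hχa : (1:ℝ)/2 < ‖χ a‖ := by
        have h1 : dist (1 : ℂ) (χ a) < 1/2 := by rwa [hgC1] at hx0
        have h2 : ‖(1:ℂ)‖ - ‖χ a‖ ≤ ‖(1:ℂ) - χ a‖ := norm_sub_norm_le _ _
        rw [dist_eq_norm] at h1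
        simp only [norm_one] at h2
        linarith
      have hqa : q a ≤ 1/2 := by
        refine hsup_le _ _ fun φ hφ => ?_
        have hφL : (⇑φ : A → ℂ) ∈ L :=
          Set.mem_insert_of_mem _ (subset_closure ⟨φ, hφ, rfl⟩)
        have hx1 : dist (gC ⟨⇑φ, hφL⟩) (Ψ a ⟨⇑φ, hφL⟩) < 1/2 :=
          lt_of_le_of_lt (ContinuousMap.dist_apply_le_dist _) hbdist
        have hgC0 : gC ⟨⇑φ, hφL⟩ = 0 := by
          have := hg0 (show ((⟨⇑φ, hφL⟩ : L) : A → ℂ) ∈ K from subset_closure ⟨φ, hφ, rfl⟩)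
          simp only [hgCdef, ContinuousMap.comp_apply, ContinuousMap.coe_mk]
          rw [this]
          norm_num
        rw [hgC0, dist_eq_norm, zero_sub, norm_neg] at hx1
        exact hx1.le
      have := hdom χ hχ a
      linarith
    · intro hf
      exact mk_char f (hKΦ hf)
end

section
/- Let T be a Tychonoff space and χ a Hermitian character on C(T). For any finitely many φ₁,…,φₛ ∈ C(T), there exists t ∈ T with φᵢ(t) = χ(φᵢ) for all i. In particular, the image of T under the Dirac map is dense in X*(C(T)). -/
/-- Evaluation at a point, as a Hermitian character of `C(T, ℂ)`. -/
noncomputable def diracChar (T : Type*) [TopologicalSpace T] (t : T) : C(T, ℂ) →⋆ₐ[ℂ] ℂ where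
  toFun φ := φ t
  map_one' := rfl
  map_mul' _ _ := rfl
  map_zero' := rfl
  map_add' _ _ := rfl
  commutes' _ := rfl
  map_star' _ := rfl

/-- The Hermitian character space of `C(T, ℂ)` with the topology of pointwise convergence. -/
def HermCharSpace (T : Type*) [TopologicalSpace T] : Type _ :=
  {f : C(T, ℂ) → ℂ // ∃ χ : C(T, ℂ) →⋆ₐ[ℂ] ℂ, f = ⇑χ}

noncomputable instance (T : Type*) [TopologicalSpace T] : TopologicalSpace (HermCharSpace T) :=
  instTopologicalSpaceSubtype

/-- The Dirac map `T → X*(C(T))`. -/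
noncomputable def dirac (T : Type*) [TopologicalSpace T] (t : T) : HermCharSpace T :=
  ⟨⇑(diracChar T t), ⟨diracChar T t, rfl⟩⟩

/-! Put `g i = φ i - χ (φ i)` and `ψ = ∑ |g i|²`. Since `χ` is a Hermitian character,
`χ ψ = ∑ |χ (g i)|² = 0`, so `ψ` is not invertible in `C(T)` and hence vanishes at some `t`;
there every `g i` vanishes. Density in the pointwise topology needs agreement with `χ` only on
finitely many functions at a time, which is exactly this. -/

open scoped ComplexOrder

theorem Finset.sum_star_mul_self_eq_zero_iff {ι R : Type*} [CommRing R] [PartialOrder R]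
    [StarRing R] [StarOrderedRing R] [NoZeroDivisors R] (s : Finset ι) (f : ι → R) :
    ∑ i ∈ s, star (f i) * f i = 0 ↔ ∀ i ∈ s, f i = 0 := by
  rw [Finset.sum_eq_zero_iff_of_nonneg fun i _ => star_mul_self_nonneg (f i)]
  simp only [mul_eq_zero, star_eq_zero, or_self]

theorem ContinuousMap.exists_apply_eq_zero_of_map_eq_zero {X R M F : Type*} [TopologicalSpace X]
    [NormedDivisionRing R] [CompleteSpace R] [MonoidWithZero M] [Nontrivial M]
    [FunLike F C(X, R) M] [MonoidHomClass F C(X, R) M] (χ : F) {f : C(X, R)} (hf : χ f = 0) :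
    ∃ x, f x = 0 := by
  by_contra! h
  simpa [hf] using ((f.isUnit_iff_forall_ne_zero).2 h).map χ

theorem ContinuousMap.exists_forall_apply_eq_of_starAlgHom {X 𝕜 ι : Type*} [TopologicalSpace X]
    [RCLike 𝕜] [Fintype ι] (χ : C(X, 𝕜) →⋆ₐ[𝕜] 𝕜) (φ : ι → C(X, 𝕜)) :
    ∃ x, ∀ i, φ i x = χ (φ i) := by
  set g : ι → C(X, 𝕜) := fun i => φ i - algebraMap 𝕜 _ (χ (φ i))
  have hχg : ∀ i, χ (g i) = 0 := fun i => by simp [g, AlgHomClass.commutes]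
  obtain ⟨x, hx⟩ := exists_apply_eq_zero_of_map_eq_zero χ
    (f := ∑ i, star (g i) * g i) (by simp [hχg])
  have hgx : ∀ i, g i x = 0 := fun i =>
    (Finset.univ.sum_star_mul_self_eq_zero_iff fun i => g i x).1 (by simpa using hx) i
      (Finset.mem_univ i)
  exact ⟨x, fun i => sub_eq_zero.1 (by simpa [g] using hgx i)⟩

theorem mem_closure_pi_of_forall_finset_exists_eqOn {ι : Type*} {β : ι → Type*}
    [∀ i, TopologicalSpace (β i)] {s : Set (∀ i, β i)} {x : ∀ i, β i}
    (h : ∀ I : Finset ι, ∃ y ∈ s, ∀ i ∈ I, y i = x i) : x ∈ closure s := by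
  refine mem_closure_iff_nhds.2 fun u hu => ?_
  rw [nhds_pi, Filter.mem_pi'] at hu
  obtain ⟨I, t, ht, htu⟩ := hu
  obtain ⟨y, hys, hyx⟩ := h I
  exact ⟨y, htu fun i hi => hyx i hi ▸ mem_of_mem_nhds (ht i), hys⟩

theorem character_is_locally_evaluation_general (T : Type*) [TopologicalSpace T] :
    (∀ (χ : C(T, ℂ) →⋆ₐ[ℂ] ℂ) (s : ℕ) (φ : Fin s → C(T, ℂ)),
      ∃ t : T, ∀ i : Fin s, φ i t = χ (φ i)) ∧
    Dense (Set.range (dirac T)) := by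
  refine ⟨fun χ _ φ => ContinuousMap.exists_forall_apply_eq_of_starAlgHom χ φ, ?_⟩
  refine Topology.IsInducing.subtypeVal.dense_iff.2 fun ⟨_, χ, rfl⟩ => ?_
  refine mem_closure_pi_of_forall_finset_exists_eqOn fun I => ?_
  obtain ⟨t, ht⟩ := ContinuousMap.exists_forall_apply_eq_of_starAlgHom χ ((↑) : I → C(T, ℂ))
  exact ⟨_, ⟨dirac T t, Set.mem_range_self t, rfl⟩, fun φ hφ => ht ⟨φ, hφ⟩⟩

/-- given a Hermitian character `χ` on `C(T)` and finitely many functions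
`φ₁, …, φₛ`, there is a point `t ∈ T` with `φᵢ(t) = χ(φᵢ)` for all `i`; in particular, the
image of `T` under the Dirac map is dense in `X*(C(T))`. -/
theorem character_is_locally_evaluation (T : Type*) [TopologicalSpace T] [T2Space T]
    [CompletelyRegularSpace T] :
    (∀ (χ : C(T, ℂ) →⋆ₐ[ℂ] ℂ) (s : ℕ) (φ : Fin s → C(T, ℂ)),
      ∃ t : T, ∀ i : Fin s, φ i t = χ (φ i)) ∧
    Dense (Set.range (dirac T)) :=
  character_is_locally_evaluation_general T
end

section
/- Let A₁, A₂ be commutative unital *-algebras, with A₁ ⊗ A₂ the algebraic tensor product made into a *-algebra via (x₁⊗x₂)(y₁⊗y₂) = x₁y₁ ⊗ x₂y₂ and (x₁⊗x₂)* = x₁*⊗x₂*. If Hermitian characters separate points of A₁ and of A₂, then the characters of the form z ↦ Σχ₁(aᵢ)χ₂(bᵢ) (for χ₁, χ₂ Hermitian characters of A₁, A₂ and z = Σaᵢ⊗bᵢ) separate points of A₁ ⊗ A₂. -/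
/-!
Write `z = ∑ mᵢ ⊗ eᵢ` along a basis `(eᵢ)` of the second factor, so that some coefficient `mᵢ`
is nonzero. A character `χ₁` with `χ₁ mᵢ ≠ 0` makes `(χ₁ ⊗ id) z ∈ A₂` nonzero, since its
`i`-th coordinate is `χ₁ mᵢ`; a character `χ₂` not vanishing there gives `(χ₁ ⊗ χ₂) z ≠ 0`.
-/

open scoped TensorProduct

namespace TensorProduct

variable {R M N : Type*} [CommRing R] [AddCommGroup M] [Module R M] [AddCommGroup N] [Module R N]

theorem exists_rid_lTensor_ne_zero [Module.Free R N] {z : M ⊗[R] N} (hz : z ≠ 0) :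
    ∃ g : Module.Dual R N, TensorProduct.rid R M (g.lTensor M z) ≠ 0 := by
  classical
  let b := Module.Free.chooseBasis R N
  obtain ⟨i, hi⟩ : ∃ i, equivFinsuppOfBasisRight b z i ≠ 0 :=
    Finsupp.ne_iff.mp ((equivFinsuppOfBasisRight b).map_ne_zero_iff.mpr hz)
  exact ⟨b.coord i, by rwa [← equivFinsuppOfBasisRight_apply]⟩

theorem dual_apply_rid_lTensor (f : Module.Dual R M) (g : Module.Dual R N) (z : M ⊗[R] N) :
    f (TensorProduct.rid R M (g.lTensor M z)) = g (TensorProduct.lid R N (f.rTensor N z)) := by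
  induction z using TensorProduct.induction_on with
  | zero => simp
  | tmul m n => simp [mul_comm]
  | add x y hx hy => simp only [map_add, hx, hy]

theorem exists_dual_apply_lid_rTensor_ne_zero [Module.Free R N] {ι κ : Type*}
    (f : ι → Module.Dual R M) (g : κ → Module.Dual R N)
    (hf : ∀ m : M, m ≠ 0 → ∃ i, f i m ≠ 0) (hg : ∀ n : N, n ≠ 0 → ∃ j, g j n ≠ 0)
    {z : M ⊗[R] N} (hz : z ≠ 0) :
    ∃ i j, g j (TensorProduct.lid R N ((f i).rTensor N z)) ≠ 0 := by
  obtain ⟨g₀, hg₀⟩ := exists_rid_lTensor_ne_zero hz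
  obtain ⟨i, hi⟩ := hf _ hg₀
  have hne : TensorProduct.lid R N ((f i).rTensor N z) ≠ 0 := fun h =>
    hi (by rw [dual_apply_rid_lTensor, h, map_zero])
  obtain ⟨j, hj⟩ := hg _ hne
  exact ⟨i, j, hj⟩

end TensorProduct

theorem Algebra.TensorProduct.lift_apply_eq_apply_lid_rTensor {R A B : Type*} [CommRing R]
    [Ring A] [Ring B] [Algebra R A] [Algebra R B] (f : A →ₐ[R] R) (g : B →ₐ[R] R)
    (z : A ⊗[R] B) :
    lift f g (fun a b => Commute.all (f a) (g b)) z =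
      g (TensorProduct.lid R B (f.toLinearMap.rTensor B z)) := by
  induction z using _root_.TensorProduct.induction_on with
  | zero => simp
  | tmul a b => simp [Algebra.smul_def]
  | add x y hx hy => simp only [map_add, hx, hy]

theorem tensorProduct_characters_separate_general {A₁ A₂ : Type*}
    [CommRing A₁] [CommRing A₂] [Algebra ℂ A₁] [Algebra ℂ A₂]
    [StarRing A₁] [StarRing A₂]
    (h1 : ∀ x : A₁, x ≠ 0 → ∃ χ : A₁ →⋆ₐ[ℂ] ℂ, χ x ≠ 0)
    (h2 : ∀ x : A₂, x ≠ 0 → ∃ χ : A₂ →⋆ₐ[ℂ] ℂ, χ x ≠ 0) :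
    ∀ z : A₁ ⊗[ℂ] A₂, z ≠ 0 →
      ∃ (χ₁ : A₁ →⋆ₐ[ℂ] ℂ) (χ₂ : A₂ →⋆ₐ[ℂ] ℂ),
        Algebra.TensorProduct.lift χ₁.toAlgHom χ₂.toAlgHom
          (fun a b => Commute.all (χ₁.toAlgHom a) (χ₂.toAlgHom b)) z ≠ 0 := by
  intro z hz
  obtain ⟨χ₁, χ₂, h⟩ := TensorProduct.exists_dual_apply_lid_rTensor_ne_zero
    (fun χ : A₁ →⋆ₐ[ℂ] ℂ => χ.toAlgHom.toLinearMap) (fun χ : A₂ →⋆ₐ[ℂ] ℂ => χ.toAlgHom.toLinearMap)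
    h1 h2 hz
  exact ⟨χ₁, χ₂, by rwa [Algebra.TensorProduct.lift_apply_eq_apply_lid_rTensor]⟩

/-- if Hermitian characters separate points of `A₁` and of `A₂`, then the
characters `J(χ₁, χ₂) : a ⊗ b ↦ χ₁(a) χ₂(b)` separate points of the tensor product
algebra `A₁ ⊗ A₂`. -/
theorem tensorProduct_characters_separate {A₁ A₂ : Type*}
    [CommRing A₁] [CommRing A₂] [Algebra ℂ A₁] [Algebra ℂ A₂]
    [StarRing A₁] [StarRing A₂] [StarModule ℂ A₁] [StarModule ℂ A₂]
    (h1 : ∀ x : A₁, x ≠ 0 → ∃ χ : A₁ →⋆ₐ[ℂ] ℂ, χ x ≠ 0)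
    (h2 : ∀ x : A₂, x ≠ 0 → ∃ χ : A₂ →⋆ₐ[ℂ] ℂ, χ x ≠ 0) :
    ∀ z : A₁ ⊗[ℂ] A₂, z ≠ 0 →
      ∃ (χ₁ : A₁ →⋆ₐ[ℂ] ℂ) (χ₂ : A₂ →⋆ₐ[ℂ] ℂ),
        Algebra.TensorProduct.lift χ₁.toAlgHom χ₂.toAlgHom
          (fun a b => Commute.all (χ₁.toAlgHom a) (χ₂.toAlgHom b)) z ≠ 0 :=
  tensorProduct_characters_separate_general h1 h2
end
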